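/- arXiv:1408.4618 — 2 statements merged into one kernel-verified Lean document; each statement's English description precedes it below -/
import Mathlib

section
/- The function h = log ∘ v, where v(P) = log(exp(P) + 1), is strictly concave on ℝ; equivalently, its second derivative h''(P) = (e^P / (e^P+1)^2) · (1/log(e^P+1)) · (1 - e^P/log(e^P+1)) is strictly negative for all P ∈ ℝ. -/
noncomputable def v (P : ℝ) : ℝ := Real.log (Real.exp P + 1)

noncomputable def h : ℝ → ℝ := Real.log ∘ v

/-! Since `log (1 + x) < x` for `x > 0`, we have `v P < exp P`, so the last factor
`1 - exp P / v P` of `h''` is negative while the other two are positive. -/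

open Real

lemma Real.log_add_one_lt_self {x : ℝ} (hx : 0 < x) : log (x + 1) < x := by
  linarith [log_lt_sub_one_of_pos (by linarith : 0 < x + 1) (by linarith : x + 1 ≠ 1)]

lemma v_pos (P : ℝ) : 0 < v P :=
  log_pos (by linarith [exp_pos P])

lemma v_lt_exp (P : ℝ) : v P < exp P :=
  log_add_one_lt_self (exp_pos P)

lemma hasDerivAt_v (P : ℝ) : HasDerivAt v (exp P / (exp P + 1)) P :=
  ((hasDerivAt_exp P).add_const 1).log (by positivity)

lemma hasDerivAt_h (P : ℝ) : HasDerivAt h (exp P / ((exp P + 1) * v P)) P := by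
  show HasDerivAt (fun y => log (v y)) _ P
  simpa only [div_div] using (hasDerivAt_v P).log (v_pos P).ne'

lemma deriv_h : deriv h = fun P => exp P / ((exp P + 1) * v P) :=
  funext fun P => (hasDerivAt_h P).deriv

noncomputable def hDeriv2 (P : ℝ) : ℝ :=
  exp P / (exp P + 1) ^ 2 * (1 / log (exp P + 1)) * (1 - exp P / log (exp P + 1))

lemma hasDerivAt_deriv_h (P : ℝ) : HasDerivAt (deriv h) (hDeriv2 P) P := by
  rw [deriv_h]
  have hu : exp P + 1 ≠ 0 := by positivity
  have hv : v P ≠ 0 := (v_pos P).ne'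
  refine ((hasDerivAt_exp P).div (((hasDerivAt_exp P).add_const 1).mul (hasDerivAt_v P))
    (mul_ne_zero hu hv)).congr_deriv ?_
  unfold hDeriv2
  rw [show log (exp P + 1) = v P from rfl, Pi.mul_apply]
  field_simp
  ring

lemma hDeriv2_neg (P : ℝ) : hDeriv2 P < 0 := by
  have hfactor : 1 - exp P / v P < 0 := by
    rw [sub_neg, one_lt_div (v_pos P)]
    exact v_lt_exp P
  have hpos : 0 < exp P / (exp P + 1) ^ 2 * (1 / v P) := by
    have := v_pos P
    positivity
  exact mul_neg_of_pos_of_neg hpos hfactor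

theorem log_comp_v_strictConcave :
    StrictConcaveOn ℝ Set.univ h ∧
    ∀ P : ℝ,
      (Real.exp P / (Real.exp P + 1) ^ 2) * (1 / Real.log (Real.exp P + 1)) *
        (1 - Real.exp P / Real.log (Real.exp P + 1)) < 0 ∧
      deriv (deriv h) P =
        (Real.exp P / (Real.exp P + 1) ^ 2) * (1 / Real.log (Real.exp P + 1)) *
          (1 - Real.exp P / Real.log (Real.exp P + 1)) := by
  have deriv_deriv_h (P : ℝ) : deriv (deriv h) P = hDeriv2 P := (hasDerivAt_deriv_h P).deriv
  refine ⟨strictConcaveOn_univ_of_deriv2_neg ?_ ?_, fun P => ⟨hDeriv2_neg P, deriv_deriv_h P⟩⟩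
  · exact continuous_iff_continuousAt.2 fun P => (hasDerivAt_h P).continuousAt
  · intro P
    simpa only [Function.iterate_succ, Function.iterate_zero, Function.comp_apply, id,
      deriv_deriv_h] using hDeriv2_neg P
end

section
/- In the program of the previous context with the additional availability constraint 0 ≤ π ≤ c: if E(R_g)/k^A < E(K⁽¹⁾)/(k^π·𝒦⁽⁰⁾), then the optimal shareholding is π* = min(c, 1/(k^π·𝒦⁽⁰⁾)); moreover if c < 1/(k^π·𝒦⁽⁰⁾) and E(R_g) > 0, then the optimal Ax* = (1 − k^π·c·𝒦⁽⁰⁾)/k^A > 0, i.e. the solvency constraint is binding. -/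
theorem risk_neutral_with_cap
    (ERg EK1 K0 kA kπ c : ℝ) (hK0 : 0 < K0) (hkA : 0 < kA) (hkπ : 0 < kπ)
    (hc : 0 < c) (hERg : 0 < ERg)
    (hlt : ERg / kA < EK1 / (kπ * K0)) :
    let S : Set (ℝ × ℝ) :=
      {p | 0 ≤ p.1 ∧ 0 ≤ p.2 ∧ p.2 ≤ c ∧ kA * p.1 + kπ * p.2 * K0 ≤ 1}
    let obj : ℝ × ℝ → ℝ := fun p => p.1 * ERg + p.2 * EK1
    (∃ p ∈ S, ∀ q ∈ S, obj q ≤ obj p) ∧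
    ∀ p ∈ S, (∀ q ∈ S, obj q ≤ obj p) →
      p.2 = min c (1 / (kπ * K0)) ∧
      (c < 1 / (kπ * K0) →
        p.1 = (1 - kπ * c * K0) / kA ∧ 0 < p.1) := by
  intro S obj
  have hkK : 0 < kπ * K0 := mul_pos hkπ hK0
  have hmul : ERg * (kπ * K0) < EK1 * kA := (div_lt_div_iff₀ hkA hkK).mp hlt
  set m := min c (1 / (kπ * K0)) with hm
  have hm0 : 0 < m := lt_min hc (by positivity)
  have hmc : m ≤ c := min_le_left _ _
  have hm1 : m ≤ 1 / (kπ * K0) := min_le_right _ _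
  have hmK : kπ * m * K0 ≤ 1 := by
    have h := (le_div_iff₀ hkK).mp hm1
    nlinarith
  set a := (1 - kπ * m * K0) / kA with ha
  have haK : kA * a = 1 - kπ * m * K0 := by
    rw [ha]; field_simp
  have ha0 : 0 ≤ a := div_nonneg (by linarith) hkA.le
  have hpS : (a, m) ∈ S := ⟨ha0, hm0.le, hmc, by simp only; linarith⟩
  -- upper bound: every feasible q has obj q ≤ obj (a, m)
  have hub : ∀ q ∈ S, obj q ≤ obj (a, m) := by
    rintro ⟨q1, q2⟩ ⟨hq1, hq2, hq2c, hqK⟩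
    have hq2m : q2 ≤ m := by
      refine le_min hq2c ?_
      rw [le_div_iff₀ hkK]
      nlinarith
    have hq1' : kA * q1 ≤ 1 - kπ * q2 * K0 := by linarith
    simp only [obj]
    have key : kA * (a * ERg + m * EK1) - kA * (q1 * ERg + q2 * EK1) ≥ 0 := by
      have h1 : kA * (a * ERg) = (1 - kπ * m * K0) * ERg := by
        rw [← mul_assoc, haK]
      nlinarith [mul_le_mul_of_nonneg_right hq1' hERg.le,
        mul_nonneg (sub_nonneg.mpr hq2m) (sub_nonneg.mpr hmul.le)]
    nlinarith
  refine ⟨⟨(a, m), hpS, hub⟩, ?_⟩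
  rintro ⟨p1, p2⟩ ⟨hp1, hp2, hp2c, hpK⟩ hopt
  have heq : p1 * ERg + p2 * EK1 = a * ERg + m * EK1 :=
    le_antisymm (hub (p1, p2) ⟨hp1, hp2, hp2c, hpK⟩) (hopt (a, m) hpS)
  have hp2m : p2 ≤ m := by
    refine le_min hp2c ?_
    rw [le_div_iff₀ hkK]
    nlinarith
  have hp1' : kA * p1 ≤ 1 - kπ * p2 * K0 := by linarith
  have hp2eq : p2 = m := by
    by_contra hne
    have hlt2 : p2 < m := lt_of_le_of_ne hp2m hne
    have : kA * (p1 * ERg + p2 * EK1) < kA * (a * ERg + m * EK1) := by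
      have h1 : kA * (a * ERg) = (1 - kπ * m * K0) * ERg := by
        rw [← mul_assoc, haK]
      nlinarith [mul_le_mul_of_nonneg_right hp1' hERg.le,
        mul_pos (sub_pos.mpr hlt2) (sub_pos.mpr hmul)]
    rw [heq] at this
    exact lt_irrefl _ this
  refine ⟨hp2eq, fun hclt => ?_⟩
  have hmeq : m = c := min_eq_left hclt.le
  have hp1eq : p1 = a := by
    have : p1 * ERg = a * ERg := by
      rw [hp2eq] at heq; linarith
    exact mul_right_cancel₀ hERg.ne' this
  have hcK : kπ * c * K0 < 1 := by
    have h := (lt_div_iff₀ hkK).mp hclt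
    nlinarith
  have : a = (1 - kπ * c * K0) / kA := by rw [ha, hmeq]
  refine ⟨hp1eq.trans this, ?_⟩
  rw [hp1eq, this]
  exact div_pos (by linarith) hkA
end
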